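/- Let [B,i,j] be a framed representation on V¹ and [B',i',j'] a framed representation on V². If [B,i,j] is stable, then the map τ : E(V¹,V²) ⊕ L(W,V²) ⊕ L(V¹,W) → L(V¹,V²) is surjective. -/

import Mathlib

/-!
The trace pairing `⟨D, f⟩ = ∑ₖ tr (fₖ ∘ Dₖ)` identifies `L(V², V¹)` with the dual of
`L(V¹, V²)`, so `τ` is onto as soon as no nonzero `D : L(V², V¹)` annihilates its image.
Pairing `D` with `τ(0, a, 0)` gives `∑ₖ tr (aₖ ∘ jₖ ∘ Dₖ)`, and pairing it with `τ(C, 0, 0)`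
gives, after reindexing the arrows by `h ↦ h̄` and using `ε(h̄) = -ε(h)`,
`∑ₕ ε(h) tr (Cₕ ∘ (B_h̄ ∘ D_{t h} - D_{s h} ∘ B'_h̄))`. Hence an annihilating `D` satisfies
`j ∘ D = 0` and `B ∘ D = D ∘ B'`, so the images of the `Dᵢ` form a `B`-stable subspace
of `ker j`, which vanishes by stability.
-/

noncomputable section

/-- Cast of graded components of a family of `ℂ`-vector spaces along an equality of indices. -/
def lcast {I : Type} (V : I → Type) [∀ i, AddCommGroup (V i)] [∀ i, Module ℂ (V i)]
    {i j : I} (hij : i = j) : V i ≃ₗ[ℂ] V j := by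
  subst hij; exact LinearEquiv.refl ℂ (V i)

open LinearMap

section TracePairing

variable {K : Type*} [Field K]

theorem LinearMap.eq_zero_of_forall_trace_comp_eq_zero {M N : Type*} [AddCommGroup M]
    [Module K M] [AddCommGroup N] [Module K N] [FiniteDimensional K N] (D : N →ₗ[K] M)
    (hD : ∀ f : M →ₗ[K] N, trace K N (f ∘ₗ D) = 0) : D = 0 := by
  ext n
  rw [zero_apply, ← Module.forall_dual_apply_eq_zero_iff K]
  intro ψ
  have hrank_one : dualTensorHom K M N (ψ ⊗ₜ n) ∘ₗ D = dualTensorHom K N N ((ψ ∘ₗ D) ⊗ₜ n) := by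
    ext; simp
  simpa [hrank_one, trace_eq_contract_apply] using hD (dualTensorHom K M N (ψ ⊗ₜ n))

variable (K) {ι : Type*} [Fintype ι] (M N : ι → Type*) [∀ i, AddCommGroup (M i)]
  [∀ i, Module K (M i)] [∀ i, AddCommGroup (N i)] [∀ i, Module K (N i)]

def tracePairing : (∀ i, N i →ₗ[K] M i) →ₗ[K] Module.Dual K (∀ i, M i →ₗ[K] N i) :=
  LinearMap.mk₂ K (fun D f => ∑ i, trace K (N i) (f i ∘ₗ D i))
    (by simp [comp_add, Finset.sum_add_distrib]) (by simp [comp_smul, Finset.mul_sum])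
    (by simp [add_comp, Finset.sum_add_distrib]) (by simp [smul_comp, Finset.mul_sum])

variable {K M N}

theorem tracePairing_apply (D : ∀ i, N i →ₗ[K] M i) (f : ∀ i, M i →ₗ[K] N i) :
    tracePairing K M N D f = ∑ i, trace K (N i) (f i ∘ₗ D i) :=
  rfl

theorem tracePairing_injective [∀ i, FiniteDimensional K (N i)] :
    Function.Injective (tracePairing K M N) := by
  classical
  refine (injective_iff_map_eq_zero _).mpr fun D hD => funext fun i => ?_
  refine eq_zero_of_forall_trace_comp_eq_zero (D i) fun f => ?_
  have := LinearMap.congr_fun hD (Pi.single i f)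
  rwa [tracePairing_apply, Finset.sum_eq_single i (fun j _ hj => by simp [hj]) (by simp),
    Pi.single_eq_same] at this

theorem tracePairing_surjective [∀ i, FiniteDimensional K (M i)]
    [∀ i, FiniteDimensional K (N i)] : Function.Surjective (tracePairing K M N) := by
  refine (injective_iff_surjective_of_finrank_eq_finrank ?_).mp tracePairing_injective
  simp only [Subspace.dual_finrank_eq, Module.finrank_pi_fintype, Module.finrank_linearMap,
    mul_comm]

end TracePairing

section Lcast

variable {I : Type} {M N : I → Type} [∀ i, AddCommGroup (M i)] [∀ i, Module ℂ (M i)]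
  [∀ i, AddCommGroup (N i)] [∀ i, Module ℂ (N i)]

@[simp]
theorem lcast_rfl {i : I} (p : i = i) : lcast M p = LinearEquiv.refl ℂ (M i) :=
  rfl

theorem lcast_comp_comp_lcast_symm (D : ∀ i, M i →ₗ[ℂ] N i) {i j : I} (p : i = j) :
    (lcast N p).toLinearMap ∘ₗ D i ∘ₗ (lcast M p).symm.toLinearMap = D j := by
  subst p; rfl

@[simp]
theorem lcast_symm {i j : I} (p : i = j) : (lcast M p).symm = lcast M p.symm := by
  subst p; rfl

@[simp]
theorem lcast_lcast_apply {i j k : I} (p : i = j) (q : j = k) (x : M i) :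
    lcast M q (lcast M p x) = lcast M (p.trans q) x := by
  subst p q; rfl

theorem eq_lcast_comp_comp_lcast_symm {H : Type} {a b : H → I} (X : ∀ h, M (a h) →ₗ[ℂ] N (b h)) {h₁ h₂ : H}
    (e : h₁ = h₂) :
    X h₂ = (lcast N (congrArg b e)).toLinearMap ∘ₗ X h₁ ∘ₗ
      (lcast M (congrArg a e)).symm.toLinearMap := by
  subst e; rfl

end Lcast

section Reverse

variable {I H : Type} (bar : H → H) {a b c a' b' c' : H → I} {L M N : I → Type}
  [∀ i, AddCommGroup (L i)] [∀ i, Module ℂ (L i)] [∀ i, AddCommGroup (M i)]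
  [∀ i, Module ℂ (M i)] [∀ i, AddCommGroup (N i)] [∀ i, Module ℂ (N i)]
  (ha : ∀ h, a (bar h) = a' h) (hb : ∀ h, b (bar h) = b' h) (hc : ∀ h, c (bar h) = c' h)

/-- `X h̄`, seen as a map along the reversed arrow of `h`; the casts are needed because
`a h̄ = a' h` and `b h̄ = b' h` hold only propositionally. -/
def reverse (X : ∀ h, M (a h) →ₗ[ℂ] N (b h)) (h : H) : M (a' h) →ₗ[ℂ] N (b' h) :=
  (lcast N (hb h)).toLinearMap ∘ₗ X (bar h) ∘ₗ (lcast M (ha h)).symm.toLinearMap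

theorem reverse_comp (X : ∀ h, M (b h) →ₗ[ℂ] N (c h)) (Y : ∀ h, L (a h) →ₗ[ℂ] M (b h)) (h : H) :
    reverse bar ha hc (fun h => X h ∘ₗ Y h) h = reverse bar hb hc X h ∘ₗ reverse bar ha hb Y h := by
  ext; simp [reverse]

theorem reverse_diag (D : ∀ i, M i →ₗ[ℂ] N i) (h : H) :
    reverse bar ha ha (fun h => D (a h)) h = D (a' h) :=
  lcast_comp_comp_lcast_symm D (ha h)

theorem trace_reverse (Z : ∀ h, M (a h) →ₗ[ℂ] M (a h)) (h : H) :
    trace ℂ _ (reverse bar ha ha Z h) = trace ℂ _ (Z (bar h)) :=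
  trace_conj' (Z (bar h)) (lcast M (ha h))

theorem reverse_reverse (hbar : Function.Involutive bar) (ha' : ∀ h, a' (bar h) = a h)
    (hb' : ∀ h, b' (bar h) = b h) (X : ∀ h, M (a h) →ₗ[ℂ] N (b h)) :
    reverse bar ha' hb' (reverse bar ha hb X) = X := by
  funext h
  ext x
  rw [reverse, reverse, eq_lcast_comp_comp_lcast_symm X (hbar h)]
  simp

theorem trace_reverse_comp (hbar : Function.Involutive bar) (ha' : ∀ h, a' (bar h) = a h)
    (hb' : ∀ h, b' (bar h) = b h) (X : ∀ h, M (a h) →ₗ[ℂ] N (b h))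
    (Y : ∀ h, N (b' h) →ₗ[ℂ] M (a' h)) (h : H) :
    trace ℂ _ (reverse bar ha hb X h ∘ₗ Y h) =
      trace ℂ _ (X (bar h) ∘ₗ reverse bar hb' ha' Y (bar h)) := by
  conv_lhs => rw [← reverse_reverse bar hb' ha' hbar hb ha Y]
  rw [← reverse_comp bar hb ha hb, trace_reverse]

theorem sum_mul_trace_reverse_comp [Fintype H] (hbar : Function.Involutive bar) (eps : H → ℂ)
    (heps : ∀ h, eps (bar h) = -eps h) (ha' : ∀ h, a' (bar h) = a h)
    (hb' : ∀ h, b' (bar h) = b h) (X : ∀ h, M (a h) →ₗ[ℂ] N (b h))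
    (Y : ∀ h, N (b' h) →ₗ[ℂ] M (a' h)) :
    ∑ h, eps h * trace ℂ _ (reverse bar ha hb X h ∘ₗ Y h) =
      -∑ h, eps h * trace ℂ _ (X h ∘ₗ reverse bar hb' ha' Y h) := by
  simp_rw [trace_reverse_comp bar ha hb hbar ha' hb', ← Finset.sum_neg_distrib]
  refine Fintype.sum_bijective bar hbar.bijective _ _ fun h => ?_
  rw [heps, neg_mul, neg_neg]

theorem comp_eq_comp_of_reverse (hbar : Function.Involutive bar) (ha' : ∀ h, a' (bar h) = a h)
    (hb' : ∀ h, b' (bar h) = b h) (X : ∀ h, N (a h) →ₗ[ℂ] N (b h))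
    (X' : ∀ h, M (a h) →ₗ[ℂ] M (b h)) (D : ∀ i, M i →ₗ[ℂ] N i)
    (hrel : ∀ h, reverse bar ha hb X h ∘ₗ D (a' h) = D (b' h) ∘ₗ reverse bar ha hb X' h)
    (h : H) : X h ∘ₗ D (a h) = D (b h) ∘ₗ X' h := by
  simpa only [reverse_comp bar ha' ha' hb', reverse_comp bar ha' hb' hb', reverse_diag,
    reverse_reverse bar ha hb hbar] using congrArg (fun F => reverse bar ha' hb' F h) (funext hrel)

end Reverse

theorem eq_zero_of_stable {I H : Type} {s t : H → I} {V1 V2 W : I → Type}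
    [∀ i, AddCommGroup (V1 i)] [∀ i, Module ℂ (V1 i)] [∀ i, AddCommGroup (V2 i)]
    [∀ i, Module ℂ (V2 i)] [∀ i, AddCommGroup (W i)] [∀ i, Module ℂ (W i)]
    (B : ∀ h, V1 (s h) →ₗ[ℂ] V1 (t h)) (B' : ∀ h, V2 (s h) →ₗ[ℂ] V2 (t h))
    (jV : ∀ i, V1 i →ₗ[ℂ] W i)
    (hstab : ∀ S : ∀ i, Submodule ℂ (V1 i), (∀ h, (S (s h)).map (B h) ≤ S (t h)) →
      (∀ i, S i ≤ ker (jV i)) → ∀ i, S i = ⊥)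
    (D : ∀ i, V2 i →ₗ[ℂ] V1 i) (hj : ∀ i, jV i ∘ₗ D i = 0)
    (hB : ∀ h, B h ∘ₗ D (s h) = D (t h) ∘ₗ B' h) : D = 0 := by
  refine funext fun i => range_eq_bot.mp (hstab (fun i => range (D i)) (fun h => ?_)
    (fun i => range_le_ker_iff.mpr (hj i)) i)
  rw [← range_comp, hB]
  exact range_comp_le_range _ _

theorem dite_add_zero {α : Type*} [AddZeroClass α] {p : Prop} [Decidable p] (a b : p → α) :
    (if h : p then a h + b h else 0) = (if h : p then a h else 0) + if h : p then b h else 0 := by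
  split_ifs <;> simp

section FramedRepresentation

variable {I H : Type} [Fintype I] [Fintype H] [DecidableEq I] {s t : H → I} {bar : H → H}
  (s_bar : ∀ h, s (bar h) = t h) (t_bar : ∀ h, t (bar h) = s h) (eps : H → ℤ)
  {V1 V2 W : I → Type} [∀ i, AddCommGroup (V1 i)] [∀ i, Module ℂ (V1 i)]
  [∀ i, AddCommGroup (V2 i)] [∀ i, Module ℂ (V2 i)] [∀ i, AddCommGroup (W i)]
  [∀ i, Module ℂ (W i)]
  (B : ∀ h, V1 (s h) →ₗ[ℂ] V1 (t h)) (B' : ∀ h, V2 (s h) →ₗ[ℂ] V2 (t h))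
  (iV' : ∀ i, W i →ₗ[ℂ] V2 i) (jV : ∀ i, V1 i →ₗ[ℂ] W i)

/-- The map `τ`, in the cast form of the theorem, so that its coercion is definitionally that map. -/
def tau : ((∀ h, V1 (s h) →ₗ[ℂ] V2 (t h)) × (∀ i, W i →ₗ[ℂ] V2 i) × (∀ i, V1 i →ₗ[ℂ] W i))
    →ₗ[ℂ] (∀ k, V1 k →ₗ[ℂ] V2 k) where
  toFun Cab k := (∑ h : H, if hk : t h = k then
      (eps h : ℂ) • ((lcast V2 hk).toLinearMap ∘ₗ
        (B' h ∘ₗ (lcast V2 (t_bar h)).toLinearMap ∘ₗ Cab.1 (bar h)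
          + Cab.1 h ∘ₗ (lcast V1 (t_bar h)).toLinearMap ∘ₗ B (bar h))
        ∘ₗ (lcast V1 ((s_bar h).trans hk)).symm.toLinearMap) else 0)
    + iV' k ∘ₗ Cab.2.2 k + Cab.2.1 k ∘ₗ jV k
  map_add' x y := by
    ext k : 1
    simp only [Prod.fst_add, Prod.snd_add, Pi.add_apply, add_comp, comp_add, smul_add,
      dite_add_zero, Finset.sum_add_distrib]
    abel
  map_smul' c x := by
    ext k : 1
    simp only [Prod.smul_fst, Prod.smul_snd, Pi.smul_apply, smul_comp, comp_smul, ← smul_add,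
      smul_comm _ c, RingHom.id_apply]
    simp only [smul_add, Finset.smul_sum, smul_dite, smul_zero]

variable (D : ∀ i, V2 i →ₗ[ℂ] V1 i)

theorem tracePairing_tau_framing (a : ∀ i, W i →ₗ[ℂ] V2 i) :
    tracePairing ℂ V1 V2 D (tau s_bar t_bar eps B B' iV' jV (0, a, 0)) =
      tracePairing ℂ W V2 (fun i => jV i ∘ₗ D i) a := by
  simp [tau, tracePairing_apply, comp_assoc]

theorem tracePairing_tau_arrows_eq_sum (C : ∀ h, V1 (s h) →ₗ[ℂ] V2 (t h)) :
    tracePairing ℂ V1 V2 D (tau s_bar t_bar eps B B' iV' jV (C, 0, 0)) =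
      ∑ h, (eps h : ℂ) * (trace ℂ _ (B' h ∘ₗ reverse bar s_bar t_bar C h ∘ₗ D (t h)) +
        trace ℂ _ (C h ∘ₗ reverse bar s_bar t_bar B h ∘ₗ D (t h))) := by
  simp only [tau, tracePairing_apply, LinearMap.coe_mk, AddHom.coe_mk, Pi.zero_apply, comp_zero,
    zero_comp, add_zero]
  have htrace : ∀ k (F : V1 k →ₗ[ℂ] V2 k),
      trace ℂ _ (F ∘ₗ D k) = (trace ℂ (V2 k) ∘ₗ lcomp ℂ _ (D k)) F := fun _ _ => rfl
  simp_rw [htrace, map_sum, apply_dite (trace ℂ _ ∘ₗ lcomp ℂ _ (D _)), map_zero]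
  rw [Finset.sum_comm]
  simp_rw [Fintype.sum_dite_eq]
  refine Finset.sum_congr rfl fun h _ => ?_
  simp [reverse, lcomp_apply', add_comp, smul_comp, mul_add, comp_assoc]

theorem tracePairing_tau_arrows [∀ i, FiniteDimensional ℂ (V2 i)] (hbar : Function.Involutive bar)
    (eps_bar : ∀ h, eps (bar h) = -eps h) (C : ∀ h, V1 (s h) →ₗ[ℂ] V2 (t h)) :
    tracePairing ℂ V1 V2 D (tau s_bar t_bar eps B B' iV' jV (C, 0, 0)) =
      tracePairing ℂ (fun h => V1 (s h)) (fun h => V2 (t h))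
        (fun h => (eps h : ℂ) • (reverse bar s_bar t_bar B h ∘ₗ D (t h) -
          D (s h) ∘ₗ reverse bar s_bar t_bar B' h)) C := by
  have heps : ∀ h, (eps (bar h) : ℂ) = -eps h := fun h => by simp [eps_bar]
  have hswap : ∑ h, (eps h : ℂ) * trace ℂ _ (reverse bar s_bar t_bar C h ∘ₗ D (t h) ∘ₗ B' h) =
      -∑ h, (eps h : ℂ) * trace ℂ _ (C h ∘ₗ D (s h) ∘ₗ reverse bar s_bar t_bar B' h) := by
    rw [sum_mul_trace_reverse_comp bar s_bar t_bar hbar (fun h => (eps h : ℂ))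
      heps t_bar s_bar C (fun h => D (t h) ∘ₗ B' h)]
    simp only [reverse_comp bar s_bar t_bar t_bar, reverse_diag]
  rw [tracePairing_tau_arrows_eq_sum, tracePairing_apply]
  simp_rw [trace_comp_comm' _ (B' _), mul_add, Finset.sum_add_distrib, comp_assoc, hswap]
  rw [neg_add_eq_sub, ← Finset.sum_sub_distrib]
  simp only [comp_smul, comp_sub, map_smul, map_sub, smul_eq_mul, mul_sub]

theorem eq_zero_of_forall_tracePairing_tau_eq_zero [∀ i, FiniteDimensional ℂ (V2 i)]
    (hbar : Function.Involutive bar) (eps_ne : ∀ h, eps h ≠ 0)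
    (eps_bar : ∀ h, eps (bar h) = -eps h)
    (hstab : ∀ S : ∀ i, Submodule ℂ (V1 i), (∀ h, (S (s h)).map (B h) ≤ S (t h)) →
      (∀ i, S i ≤ ker (jV i)) → ∀ i, S i = ⊥)
    (hD : ∀ x, tracePairing ℂ V1 V2 D (tau s_bar t_bar eps B B' iV' jV x) = 0) : D = 0 := by
  have hj : (fun i => jV i ∘ₗ D i) = 0 :=
    tracePairing_injective (M := W) <| LinearMap.ext fun a => by
      rw [map_zero, LinearMap.zero_apply,
        ← tracePairing_tau_framing s_bar t_bar eps B B' iV' jV, hD]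
  have hrev : (fun h => (eps h : ℂ) • (reverse bar s_bar t_bar B h ∘ₗ D (t h) -
      D (s h) ∘ₗ reverse bar s_bar t_bar B' h)) = 0 :=
    tracePairing_injective (M := fun h => V1 (s h)) <| LinearMap.ext fun C => by
      rw [map_zero, LinearMap.zero_apply,
        ← tracePairing_tau_arrows s_bar t_bar eps B B' iV' jV D hbar eps_bar, hD]
  refine eq_zero_of_stable B B' jV hstab D (fun i => congr_fun hj i) fun h => ?_
  refine comp_eq_comp_of_reverse bar s_bar t_bar hbar t_bar s_bar B B' D (fun h => ?_) h
  have := congr_fun hrev h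
  rwa [Pi.zero_apply, smul_eq_zero, sub_eq_zero, or_iff_right (by exact_mod_cast eps_ne h)] at this

end FramedRepresentation

theorem stmt2
    {I H : Type} [Fintype I] [Fintype H] [DecidableEq I]
    (s t : H → I) (bar : H → H)
    (bar_invol : ∀ h, bar (bar h) = h)
    (s_bar : ∀ h, s (bar h) = t h) (t_bar : ∀ h, t (bar h) = s h)
    (eps : H → ℤ) (eps_pm : ∀ h, eps h = 1 ∨ eps h = -1)
    (eps_bar : ∀ h, eps (bar h) = - eps h)
    (V1 V2 W : I → Type)
    [∀ i, AddCommGroup (V1 i)] [∀ i, Module ℂ (V1 i)] [∀ i, FiniteDimensional ℂ (V1 i)]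
    [∀ i, AddCommGroup (V2 i)] [∀ i, Module ℂ (V2 i)] [∀ i, FiniteDimensional ℂ (V2 i)]
    [∀ i, AddCommGroup (W i)] [∀ i, Module ℂ (W i)]
    (B : ∀ h, V1 (s h) →ₗ[ℂ] V1 (t h)) (jV : ∀ i, V1 i →ₗ[ℂ] W i)
    (B' : ∀ h, V2 (s h) →ₗ[ℂ] V2 (t h)) (iV' : ∀ i, W i →ₗ[ℂ] V2 i)
    -- stability of [B, iV, jV]
    (hstab : ∀ S : ∀ i, Submodule ℂ (V1 i),
      (∀ h, (S (s h)).map (B h) ≤ S (t h)) →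
      (∀ i, S i ≤ LinearMap.ker (jV i)) →
      ∀ i, S i = ⊥) :
    Function.Surjective (fun Cab :
        (∀ h, V1 (s h) →ₗ[ℂ] V2 (t h)) × (∀ i, W i →ₗ[ℂ] V2 i) × (∀ i, V1 i →ₗ[ℂ] W i) =>
      (fun k => (∑ h : H, if hk : t h = k then
          (eps h : ℂ) • ((lcast V2 hk).toLinearMap ∘ₗ
            (B' h ∘ₗ (lcast V2 (t_bar h)).toLinearMap ∘ₗ Cab.1 (bar h)
              + Cab.1 h ∘ₗ (lcast V1 (t_bar h)).toLinearMap ∘ₗ B (bar h))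
            ∘ₗ (lcast V1 ((s_bar h).trans hk)).symm.toLinearMap) else 0)
        + iV' k ∘ₗ Cab.2.2 k + Cab.2.1 k ∘ₗ jV k : ∀ k, V1 k →ₗ[ℂ] V2 k)) := by
  have eps_ne : ∀ h, eps h ≠ 0 := fun h => by rcases eps_pm h with he | he <;> simp [he]
  show Function.Surjective (tau s_bar t_bar eps B B' iV' jV)
  refine dualMap_injective_iff.mp <| (injective_iff_map_eq_zero _).mpr fun φ hφ => ?_
  obtain ⟨D, rfl⟩ := tracePairing_surjective φ
  rw [eq_zero_of_forall_tracePairing_tau_eq_zero s_bar t_bar eps B B' iV' jV D bar_invol eps_ne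
    eps_bar hstab fun x => LinearMap.congr_fun hφ x, map_zero]
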